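/- arXiv:2001.10771 — 3 statements merged into one kernel-verified Lean document; each statement's English description precedes it below -/
import Mathlib

section
/- Let 2 ≤ m < n be integers, let G ≤ Sym(m) and H ≤ Sym(n). Suppose there exists a complete prefix code Ã over A_m with |Ã| = n such that the letterwise action of every σ ∈ G maps Ã onto itself, and suppose there is an enumeration Ã = {a_0, a_1, …, a_{n−1}} together with a group isomorphism t : H → R_G(Ã) satisfying t(σ)(a_i) = a_{σ(i)} for all σ ∈ H and all 0 ≤ i ≤ n−1 (i.e., H and R_G(Ã) are cyclically isomorphic as permutation groups, via a bijection intertwining the two actions). Then there exists an injective group homomorphism from V_n(H) into V_m(G). -/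
namespace Paper

/-- Concatenation of a finite word with an infinite word. -/
def cat {n : ℕ} (w : List (Fin n)) (ζ : ℕ → Fin n) : ℕ → Fin n :=
  fun i => if h : i < w.length then w[i]'h else ζ (i - w.length)

/-- The finite word `w` is a prefix of the infinite word `ζ`. -/
def IsPref {n : ℕ} (w : List (Fin n)) (ζ : ℕ → Fin n) : Prop :=
  ∀ (i : ℕ) (h : i < w.length), w[i]'h = ζ i

/-- An indexed family of finite words is a complete prefix code: every infinite
word has exactly one member of the family as a prefix. -/
def IsCPC {n : ℕ} {ι : Type} (P : ι → List (Fin n)) : Prop :=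
  ∀ ζ : ℕ → Fin n, ∃! i : ι, IsPref (P i) ζ

/-- `f` is the map described by the table with domain code `P`, range code `Q` and
permutations `σ, τ`: it sends `pᵢ‖σᵢ(u)` to `qᵢ‖τᵢ(u)`. -/
def TableFun {n : ℕ} {ι : Type} (P Q : ι → List (Fin n))
    (σ τ : ι → Equiv.Perm (Fin n)) (f : (ℕ → Fin n) → (ℕ → Fin n)) : Prop :=
  ∀ (i : ι) (u : ℕ → Fin n),
    f (cat (P i) (fun j => σ i (u j))) = cat (Q i) (fun j => τ i (u j))

/-- A table over a subgroup `H ≤ Sym(n)`. -/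
structure Table (n : ℕ) (H : Subgroup (Equiv.Perm (Fin n))) where
  k : ℕ
  P : Fin k → List (Fin n)
  Q : Fin k → List (Fin n)
  σ : Fin k → Equiv.Perm (Fin n)
  τ : Fin k → Equiv.Perm (Fin n)
  σ_mem : ∀ i, σ i ∈ H
  τ_mem : ∀ i, τ i ∈ H
  hP : IsCPC P
  hQ : IsCPC Q

/-- The table `T` induces the map `f`. -/
def Induces {n : ℕ} {H : Subgroup (Equiv.Perm (Fin n))} (T : Table n H)
    (f : (ℕ → Fin n) → (ℕ → Fin n)) : Prop :=
  TableFun T.P T.Q T.σ T.τ f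

/-- The symmetric Thompson group `V_n(H)`, as the set of homeomorphisms of the
Cantor space `C_n = A_n^ℕ` induced by tables over `H`. -/
def Vset (n : ℕ) (H : Subgroup (Equiv.Perm (Fin n))) :
    Set ((ℕ → Fin n) ≃ₜ (ℕ → Fin n)) :=
  { f | ∃ T : Table n H, Induces T ⇑f }

/-! ### Auxiliary material -/

section Aux

variable {m n : ℕ}

/-- Concatenation of the first `k` blocks `A (u 0), …, A (u (k-1))`. -/
def flatW (A : Fin n → List (Fin m)) (u : ℕ → Fin n) : ℕ → List (Fin m)
  | 0 => []
  | k + 1 => flatW A u k ++ A (u k)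

/-- The substitution map `C_n → C_m` sending `z₁z₂⋯` to `a_{z₁}‖a_{z₂}‖⋯`. -/
def chi (A : Fin n → List (Fin m)) (d : Fin m) (u : ℕ → Fin n) (i : ℕ) : Fin m :=
  (flatW A u (i + 1)).getD i d

theorem length_flatW_ge (A : Fin n → List (Fin m)) (hne : ∀ z : Fin n, A z ≠ [])
    (u : ℕ → Fin n) : ∀ k, k ≤ (flatW A u k).length := by
  intro k
  induction k with
  | zero => simp [flatW]
  | succ k ih =>
    have : 1 ≤ (A (u k)).length := by
      have := hne (u k)
      cases h : A (u k) with
      | nil => exact absurd h this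
      | cons a l => simp
    simp only [flatW, List.length_append]
    omega

theorem flatW_prefix (A : Fin n → List (Fin m)) (u : ℕ → Fin n) {k k' : ℕ} (h : k ≤ k') :
    flatW A u k <+: flatW A u k' := by
  induction k' with
  | zero => simp_all
  | succ k' ih =>
    rcases Nat.lt_or_ge k (k' + 1) with h' | h'
    · exact (ih (by omega)).trans ⟨A (u k'), rfl⟩
    · have : k = k' + 1 := by omega
      subst this; exact List.prefix_refl _

theorem getD_of_prefix (d : Fin m) {l l' : List (Fin m)} (h : l <+: l') {i : ℕ}
    (hi : i < l.length) : l'.getD i d = l.getD i d := by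
  obtain ⟨t, rfl⟩ := h
  rw [List.getD_append _ _ _ _ hi]

theorem chi_eq_getD (A : Fin n → List (Fin m)) (d : Fin m)
    (hne : ∀ z : Fin n, A z ≠ []) (u : ℕ → Fin n) {i k : ℕ} (h : i < k) :
    chi A d u i = (flatW A u k).getD i d := by
  unfold chi
  have h1 : i < (flatW A u (i + 1)).length :=
    lt_of_lt_of_le (Nat.lt_succ_self i) (length_flatW_ge A hne u (i + 1))
  exact (getD_of_prefix d (flatW_prefix A u (by omega : i + 1 ≤ k)) h1).symm

theorem flatW_shift (A : Fin n → List (Fin m)) (u : ℕ → Fin n) (k : ℕ) :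
    flatW A u (k + 1) = A (u 0) ++ flatW A (fun j => u (j + 1)) k := by
  induction k with
  | zero => simp [flatW]
  | succ k ih =>
    show flatW A u (k + 1) ++ A (u (k + 1)) = _
    rw [ih]
    simp [flatW, List.append_assoc]

theorem chi_cons (A : Fin n → List (Fin m)) (d : Fin m)
    (hne : ∀ z : Fin n, A z ≠ []) (u : ℕ → Fin n) :
    chi A d u = cat (A (u 0)) (chi A d (fun j => u (j + 1))) := by
  funext i
  set w := A (u 0) with hw
  by_cases hi : i < w.length
  · have h1 : chi A d u i = (flatW A u (i + 1)).getD i d := rfl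
    rw [h1, flatW_shift, List.getD_append _ _ _ _ hi, cat, dif_pos hi,
      List.getD_eq_getElem _ _ hi]
  · have hw1 : 1 ≤ w.length := by
      have := hne (u 0)
      cases h : A (u 0) with
      | nil => exact absurd h this
      | cons a l => simp [hw, h]
    push_neg at hi
    have hiw : i - w.length < i := by omega
    have h1 : chi A d u i = (flatW A u (i + 1)).getD i d := rfl
    rw [cat, dif_neg (by omega), h1, flatW_shift,
      List.getD_append_right _ _ _ _ hi,
      chi_eq_getD A d hne (fun j => u (j + 1)) hiw]

theorem cat_zero (z : Fin n) (ζ : ℕ → Fin n) : cat [z] ζ 0 = z := by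
  simp [cat]

theorem cat_shift (z : Fin n) (ζ : ℕ → Fin n) :
    (fun j => cat [z] ζ (j + 1)) = ζ := by
  funext j
  simp [cat]

theorem cat_append (w w' : List (Fin n)) (ζ : ℕ → Fin n) :
    cat (w ++ w') ζ = cat w (cat w' ζ) := by
  funext i
  simp only [cat, List.length_append]
  by_cases h1 : i < w.length
  · rw [dif_pos (by omega), dif_pos h1, List.getElem_append_left]
  · rw [dif_neg h1]
    by_cases h2 : i < w.length + w'.length
    · rw [dif_pos h2, dif_pos (by omega), List.getElem_append_right (by omega)]
    · rw [dif_neg h2, dif_neg (by omega)]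
      congr 1
      omega

theorem cat_cons (z : Fin n) (w : List (Fin n)) (ζ : ℕ → Fin n) :
    cat (z :: w) ζ = cat [z] (cat w ζ) := by
  have h : (z :: w) = [z] ++ w := rfl
  rw [h, cat_append]

theorem cat_nil (ζ : ℕ → Fin n) : cat ([] : List (Fin n)) ζ = ζ := by
  funext i
  simp [cat]

theorem chi_cat (A : Fin n → List (Fin m)) (d : Fin m)
    (hne : ∀ z : Fin n, A z ≠ []) (w : List (Fin n)) (u : ℕ → Fin n) :
    chi A d (cat w u) = cat (w.flatMap A) (chi A d u) := by
  induction w generalizing u with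
  | nil => rw [cat_nil]; simp only [List.flatMap_nil]; rw [cat_nil]
  | cons z w ih =>
    rw [cat_cons, chi_cons A d hne, cat_zero, cat_shift, ih,
      show (z :: w).flatMap A = A z ++ w.flatMap A by simp [List.flatMap],
      cat_append]

theorem cat_right_inj (w : List (Fin n)) {ζ ζ' : ℕ → Fin n}
    (h : cat w ζ = cat w ζ') : ζ = ζ' := by
  funext i
  have := congrFun h (i + w.length)
  simpa [cat, Nat.add_sub_cancel] using this

theorem isPref_cat (w : List (Fin n)) (ζ : ℕ → Fin n) : IsPref w (cat w ζ) := by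
  intro i h
  simp [cat, h]

theorem isPref_iff (w : List (Fin n)) (ζ : ℕ → Fin n) :
    IsPref w ζ ↔ ∃ ζ', ζ = cat w ζ' := by
  constructor
  · intro h
    refine ⟨fun j => ζ (j + w.length), ?_⟩
    funext i
    by_cases hi : i < w.length
    · rw [cat, dif_pos hi, h i hi]
    · rw [cat, dif_neg hi]
      congr 1
      omega
  · rintro ⟨ζ', rfl⟩
    exact isPref_cat w ζ'

theorem chi_map (A : Fin n → List (Fin m)) (d : Fin m)
    (hne : ∀ z : Fin n, A z ≠ []) {g : Fin m → Fin m} {ρ : Fin n → Fin n}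
    (hg : ∀ z : Fin n, (A z).map g = A (ρ z)) (u : ℕ → Fin n) :
    chi A d (fun j => ρ (u j)) = fun i => g (chi A d u i) := by
  have hfw : ∀ k, flatW A (fun j => ρ (u j)) k = (flatW A u k).map g := by
    intro k
    induction k with
    | zero => simp [flatW]
    | succ k ih => simp [flatW, ih, hg]
  funext i
  have h1 : i < (flatW A u (i + 1)).length :=
    lt_of_lt_of_le (Nat.lt_succ_self i) (length_flatW_ge A hne u (i + 1))
  show (flatW A (fun j => ρ (u j)) (i + 1)).getD i d = g ((flatW A u (i + 1)).getD i d)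
  rw [hfw, List.getD_eq_getElem _ _ (by simpa using h1),
    List.getD_eq_getElem _ _ h1, List.getElem_map]

theorem A_ne (A : Fin n → List (Fin m)) (hA : IsCPC A) (hn : 2 ≤ n) (hm : 0 < m) :
    ∀ z : Fin n, A z ≠ [] := by
  intro z hz
  have h2 : ∃ z' : Fin n, z' ≠ z := by
    haveI : Nontrivial (Fin n) := Fin.nontrivial_iff_two_le.mpr hn
    exact exists_ne z
  obtain ⟨z', hz'⟩ := h2
  set ζ := cat (A z') (fun _ => (⟨0, hm⟩ : Fin m)) with hζ
  obtain ⟨i, hi, huniq⟩ := hA ζ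
  have h1 : IsPref (A z) ζ := by
    intro i h
    rw [hz] at h
    simp at h
  have h3 : IsPref (A z') ζ := isPref_cat _ _
  exact hz' ((huniq z' h3).trans (huniq z h1).symm)

theorem chi_first (A : Fin n → List (Fin m)) (d : Fin m)
    (hne : ∀ z : Fin n, A z ≠ []) (u : ℕ → Fin n) :
    IsPref (A (u 0)) (chi A d u) := by
  rw [chi_cons A d hne]
  exact isPref_cat _ _

theorem chi_inj (A : Fin n → List (Fin m)) (d : Fin m)
    (hne : ∀ z : Fin n, A z ≠ []) (hA : IsCPC A)
    {u u' : ℕ → Fin n} (h : chi A d u = chi A d u') : u = u' := by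
  funext k
  induction k generalizing u u' with
  | zero =>
    obtain ⟨i, _, huniq⟩ := hA (chi A d u)
    exact (huniq (u 0) (chi_first A d hne u)).trans
      (huniq (u' 0) (h ▸ chi_first A d hne u')).symm
  | succ k ih =>
    have h0 : u 0 = u' 0 := by
      obtain ⟨i, _, huniq⟩ := hA (chi A d u)
      exact (huniq (u 0) (chi_first A d hne u)).trans
        (huniq (u' 0) (h ▸ chi_first A d hne u')).symm
    have h2 := h
    rw [chi_cons A d hne u, chi_cons A d hne u', h0] at h2
    exact ih (cat_right_inj _ h2)

/-- Decode: the unique initial code block of `ζ`. -/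
noncomputable def dec (A : Fin n → List (Fin m)) (hA : IsCPC A) (ζ : ℕ → Fin m) :
    Fin n := (hA ζ).choose

theorem dec_spec (A : Fin n → List (Fin m)) (hA : IsCPC A) (ζ : ℕ → Fin m) :
    IsPref (A (dec A hA ζ)) ζ := (hA ζ).choose_spec.1

/-- Drop the initial code block. -/
noncomputable def dropB (A : Fin n → List (Fin m)) (hA : IsCPC A) (ζ : ℕ → Fin m) :
    ℕ → Fin m :=
  fun j => ζ (j + (A (dec A hA ζ)).length)

theorem cat_dec (A : Fin n → List (Fin m)) (hA : IsCPC A) (ζ : ℕ → Fin m) :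
    ζ = cat (A (dec A hA ζ)) (dropB A hA ζ) := by
  funext i
  by_cases hi : i < (A (dec A hA ζ)).length
  · rw [cat, dif_pos hi, dec_spec A hA ζ i hi]
  · rw [cat, dif_neg hi, dropB]
    congr 1
    omega

/-- Inverse of `chi`. -/
noncomputable def psi (A : Fin n → List (Fin m)) (hA : IsCPC A) (ζ : ℕ → Fin m) :
    ℕ → Fin n :=
  fun k => dec A hA ((dropB A hA)^[k] ζ)

theorem psi_zero (A : Fin n → List (Fin m)) (hA : IsCPC A) (ζ : ℕ → Fin m) :
    psi A hA ζ 0 = dec A hA ζ := rfl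

theorem psi_shift (A : Fin n → List (Fin m)) (hA : IsCPC A) (ζ : ℕ → Fin m) :
    (fun j => psi A hA ζ (j + 1)) = psi A hA (dropB A hA ζ) := by
  funext j
  show dec A hA ((dropB A hA)^[j + 1] ζ) = dec A hA ((dropB A hA)^[j] (dropB A hA ζ))
  rw [Function.iterate_succ_apply]

theorem chi_psi (A : Fin n → List (Fin m)) (d : Fin m)
    (hne : ∀ z : Fin n, A z ≠ []) (hA : IsCPC A) (ζ : ℕ → Fin m) :
    chi A d (psi A hA ζ) = ζ := by
  funext i
  induction i using Nat.strong_induction_on generalizing ζ with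
  | _ i ih =>
    rw [chi_cons A d hne, psi_zero, psi_shift]
    set w := A (dec A hA ζ) with hw
    have hw1 : 1 ≤ w.length := by
      have := hne (dec A hA ζ)
      cases h : A (dec A hA ζ) with
      | nil => exact absurd h this
      | cons a l => simp [hw, h]
    by_cases hi : i < w.length
    · rw [cat, dif_pos hi]
      exact dec_spec A hA ζ i hi
    · push_neg at hi
      rw [cat, dif_neg (by omega)]
      rw [ih (i - w.length) (by omega) (dropB A hA ζ)]
      conv_rhs => rw [cat_dec A hA ζ]
      rw [cat]
      simp only [← hw]
      rw [dif_neg (by omega)]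

theorem chi_surj (A : Fin n → List (Fin m)) (d : Fin m)
    (hne : ∀ z : Fin n, A z ≠ []) (hA : IsCPC A) :
    Function.Surjective (chi A d) := by
  intro ζ
  exact ⟨psi A hA ζ, chi_psi A d hne hA ζ⟩

theorem chi_continuous (A : Fin n → List (Fin m)) (d : Fin m) :
    Continuous (chi A d) := by
  apply continuous_pi
  intro i
  have key : ∀ u u' : ℕ → Fin n, (∀ j, j < i + 1 → u j = u' j) →
      chi A d u i = chi A d u' i := by
    intro u u' h
    have hfl : ∀ k, k ≤ i + 1 → flatW A u k = flatW A u' k := by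
      intro k hk
      induction k with
      | zero => rfl
      | succ k ihk =>
        show flatW A u k ++ A (u k) = flatW A u' k ++ A (u' k)
        rw [ihk (by omega), h k (by omega)]
    show (flatW A u (i + 1)).getD i d = (flatW A u' (i + 1)).getD i d
    rw [hfl (i + 1) le_rfl]
  have hfac : (fun u => chi A d u i) =
      (fun v : Fin (i + 1) → Fin n => chi A d (fun j => v ⟨min j i, by omega⟩) i) ∘
        (fun u (j : Fin (i + 1)) => u (j : ℕ)) := by
    funext u
    apply key
    intro j hj
    simp [Nat.min_eq_left (by omega : j ≤ i)]
  rw [hfac]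
  exact (continuous_of_discreteTopology).comp
    (continuous_pi fun j => continuous_apply _)

end Aux

/-- **Theorem 1 of the paper.** Let `2 ≤ m < n`, `G ≤ Sym(m)`,
`H ≤ Sym(n)`. Suppose there is a complete prefix code `Ã = {a_0,…,a_{n-1}}` over
`A_m` of size `n` preserved by the letterwise action of `G`, and a group
isomorphism `t` from `H` onto the root group `R_G(Ã)` (identified with `G`, on which
the action on `Ã` is faithful) satisfying `t(σ)(a_i) = a_{σ(i)}`, i.e. `H` and
`R_G(Ã)` are cyclically isomorphic.  Then `V_n(H)` embeds in `V_m(G)`. -/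
theorem stmt8 (m n : ℕ) (hm : 2 ≤ m) (hmn : m < n)
    (G : Subgroup (Equiv.Perm (Fin m))) (H : Subgroup (Equiv.Perm (Fin n)))
    (A : Fin n → List (Fin m)) (hA : IsCPC A)
    (hGA : ∀ σ : Equiv.Perm (Fin m), σ ∈ G → ∀ i : Fin n,
      ∃ j : Fin n, (A i).map ⇑σ = A j)
    (t : ↥H ≃* ↥G)
    (ht : ∀ (σ : ↥H) (i : Fin n),
      (A i).map ⇑(↑(t σ) : Equiv.Perm (Fin m)) = A ((↑σ : Equiv.Perm (Fin n)) i)) :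
    ∃ Φ : ((ℕ → Fin n) ≃ₜ (ℕ → Fin n)) → ((ℕ → Fin m) ≃ₜ (ℕ → Fin m)),
      (∀ f ∈ Vset n H, Φ f ∈ Vset m G) ∧
      Set.InjOn Φ (Vset n H) ∧
      ∀ f ∈ Vset n H, ∀ g ∈ Vset n H, Φ (f.trans g) = (Φ f).trans (Φ g) := by
  have hn : 2 ≤ n := by omega
  have hm0 : 0 < m := by omega
  set d : Fin m := ⟨0, hm0⟩ with hd
  have hne : ∀ z : Fin n, A z ≠ [] := A_ne A hA hn hm0
  have hbij : Function.Bijective (chi A d) :=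
    ⟨fun u u' h => chi_inj A d hne hA h, chi_surj A d hne hA⟩
  let e : (ℕ → Fin n) ≃ₜ (ℕ → Fin m) :=
    Continuous.homeoOfEquivCompactToT2 (f := Equiv.ofBijective _ hbij)
      (chi_continuous A d)
  have he : ∀ u, e u = chi A d u := fun u => rfl
  have he' : ∀ u, e.symm (chi A d u) = u := by
    intro u
    have h := e.symm_apply_apply u
    rwa [he] at h
  refine ⟨fun f => e.symm.trans (f.trans e), ?_, ?_, ?_⟩
  · -- membership
    rintro f ⟨T, hT⟩
    have hCPC : ∀ (P : Fin T.k → List (Fin n)), IsCPC P →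
        IsCPC (fun i => (P i).flatMap A) := by
      intro P hP ζ
      obtain ⟨u, rfl⟩ := chi_surj A d hne hA ζ
      obtain ⟨i, hi, huniq⟩ := hP u
      obtain ⟨u₁, hu₁⟩ := (isPref_iff _ _).1 hi
      refine ⟨i, ?_, ?_⟩
      · rw [hu₁, chi_cat A d hne]
        exact isPref_cat _ _
      · intro j hj
        obtain ⟨ζ₁, hζ₁⟩ := (isPref_iff _ _).1 hj
        obtain ⟨u₁', rfl⟩ := chi_surj A d hne hA ζ₁
        rw [← chi_cat A d hne] at hζ₁
        have h2 := chi_inj A d hne hA hζ₁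
        exact huniq j (h2 ▸ isPref_cat _ _)
    refine ⟨⟨T.k, fun i => (T.P i).flatMap A, fun i => (T.Q i).flatMap A,
      fun i => (↑(t ⟨T.σ i, T.σ_mem i⟩) : Equiv.Perm (Fin m)),
      fun i => (↑(t ⟨T.τ i, T.τ_mem i⟩) : Equiv.Perm (Fin m)),
      fun i => (t ⟨T.σ i, T.σ_mem i⟩).2, fun i => (t ⟨T.τ i, T.τ_mem i⟩).2,
      hCPC T.P T.hP, hCPC T.Q T.hQ⟩, ?_⟩
    intro i v
    show (e.symm.trans (f.trans e))
        (cat ((T.P i).flatMap A)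
          (fun j => (↑(t ⟨T.σ i, T.σ_mem i⟩) : Equiv.Perm (Fin m)) (v j)))
      = cat ((T.Q i).flatMap A)
          (fun j => (↑(t ⟨T.τ i, T.τ_mem i⟩) : Equiv.Perm (Fin m)) (v j))
    obtain ⟨u, rfl⟩ := chi_surj A d hne hA v
    have harg : (cat ((T.P i).flatMap A)
        (fun j => (↑(t ⟨T.σ i, T.σ_mem i⟩) : Equiv.Perm (Fin m)) (chi A d u j)))
        = chi A d (cat (T.P i) fun j => T.σ i (u j)) := by
      rw [chi_cat A d hne,
        chi_map A d hne (g := ⇑(↑(t ⟨T.σ i, T.σ_mem i⟩) : Equiv.Perm (Fin m)))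
          (ρ := ⇑(T.σ i)) (fun z => ht ⟨T.σ i, T.σ_mem i⟩ z) u]
    rw [harg, Homeomorph.trans_apply, Homeomorph.trans_apply, he', hT i u, he,
      chi_cat A d hne,
      chi_map A d hne (g := ⇑(↑(t ⟨T.τ i, T.τ_mem i⟩) : Equiv.Perm (Fin m)))
        (ρ := ⇑(T.τ i)) (fun z => ht ⟨T.τ i, T.τ_mem i⟩ z) u]
  · -- injectivity
    intro f _ g _ h
    refine Homeomorph.ext fun x => ?_
    have h2 := congrArg (fun φ : (ℕ → Fin m) ≃ₜ (ℕ → Fin m) => e.symm (φ (e x))) h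
    simpa using h2
  · -- multiplicativity
    intro f _ g _
    refine Homeomorph.ext fun x => ?_
    simp

end Paper
end

section
/- With notation as in the successor construction: for every 1 ≤ s ≤ l and every 1 ≤ i ≤ k, the defining minimum exists, so the i-th successor (p_s)'_i is well defined; moreover the successors (p_s)'_i for 1 ≤ s ≤ l, 1 ≤ i ≤ k are pairwise distinct. -/
namespace Paper

/-- Dictionary order on finite words. -/
def DictLe {N : ℕ} (u v : List (Fin N)) : Prop :=
  u <+: v ∨ ∃ (x s t : List (Fin N)) (α β : Fin N),
    α < β ∧ u = x ++ α :: s ∧ v = x ++ β :: t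

/-- Strict dictionary order. -/
def DictLt {N : ℕ} (u v : List (Fin N)) : Prop := DictLe u v ∧ u ≠ v

/-- The candidate set at a given stage of the successor recursion for the code
enumerated by `p`: words of the form `x‖a_j` with `x` a strict prefix of an element
of `P`, `m ≤ j ≤ n-1`, which are dictionary-greater than `p s` and have not been
chosen at an earlier stage (`prev`). -/
def Cand {N : ℕ} (m : ℕ) {l : ℕ} (p : Fin l → List (Fin N)) (s : Fin l)
    (prev : Set (List (Fin N))) : Set (List (Fin N)) :=
  {w | (∃ x : List (Fin N), (∃ u : Fin l, x <+: p u ∧ x ≠ p u) ∧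
        ∃ j : Fin N, m ≤ (j : ℕ) ∧ w = x ++ [j]) ∧
       DictLt (p s) w ∧ w ∉ prev}

/-- The set of successors chosen at stages strictly earlier than stage `(s, i)`,
where stages are ordered lexicographically: first in `s`, then in `i`. -/
def Prev {N l k : ℕ} (f : Fin l → Fin k → List (Fin N)) (s : Fin l) (i : Fin k) :
    Set (List (Fin N)) :=
  {w | ∃ (s' : Fin l) (i' : Fin k), (s' < s ∨ (s' = s ∧ i' < i)) ∧ w = f s' i'}

/-- `f` is the successor assignment for the code enumerated by `p`:
`f s i` (the `i`-th successor `(p_s)'_i`) is the dictionary-least element of the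
candidate set at stage `(s, i)`. -/
def IsSuccAssign {N l k : ℕ} (m : ℕ) (p : Fin l → List (Fin N))
    (f : Fin l → Fin k → List (Fin N)) : Prop :=
  ∀ (s : Fin l) (i : Fin k),
    f s i ∈ Cand m p s (Prev f s i) ∧
    ∀ w ∈ Cand m p s (Prev f s i), DictLe (f s i) w

/-! ### Order lemmas -/

lemma lex_append_cons {N : ℕ} (u : List (Fin N)) (c : Fin N) (r : List (Fin N)) :
    List.Lex (· < ·) u (u ++ c :: r) := by
  induction u with
  | nil => exact List.Lex.nil
  | cons a u ih => exact List.Lex.cons ih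

lemma lex_split {N : ℕ} (x : List (Fin N)) {α β : Fin N} (h : α < β) (s t : List (Fin N)) :
    List.Lex (· < ·) (x ++ α :: s) (x ++ β :: t) := by
  induction x with
  | nil => exact List.Lex.rel h
  | cons a x ih => exact List.Lex.cons ih

lemma dictLt_iff_lt {N : ℕ} {u v : List (Fin N)} : DictLt u v ↔ u < v := by
  show _ ↔ List.Lex (· < ·) u v
  constructor
  · rintro ⟨(hpre | ⟨x, s, t, α, β, hab, rfl, rfl⟩), hne⟩
    · obtain ⟨w, rfl⟩ := hpre
      cases w with
      | nil => simp at hne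
      | cons c r => exact lex_append_cons u c r
    · exact lex_split x hab s t
  · intro h
    induction h with
    | @nil b l =>
        exact ⟨Or.inl ⟨b :: l, rfl⟩, by simp⟩
    | @cons a l₁ l₂ h ih =>
        obtain ⟨hle, hne⟩ := ih
        refine ⟨?_, by simpa using hne⟩
        rcases hle with hpre | ⟨x, s, t, α, β, hab, rfl, rfl⟩
        · exact Or.inl (List.cons_prefix_cons.mpr ⟨rfl, hpre⟩)
        · exact Or.inr ⟨a :: x, s, t, α, β, hab, rfl, rfl⟩
    | @rel a l₁ b l₂ h =>
        refine ⟨Or.inr ⟨[], l₁, l₂, a, b, h, rfl, rfl⟩, ?_⟩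
        intro he; rw [List.cons.injEq] at he; exact absurd he.1 (ne_of_lt h)

lemma dictLe_iff_le {N : ℕ} {u v : List (Fin N)} : DictLe u v ↔ u ≤ v := by
  rw [le_iff_lt_or_eq, ← dictLt_iff_lt]
  constructor
  · intro h
    by_cases he : u = v
    · exact Or.inr he
    · exact Or.inl ⟨h, he⟩
  · rintro (⟨h, _⟩ | rfl)
    · exact h
    · exact Or.inl (List.prefix_refl u)

/-! ### Tree counting -/

/-- Strict prefixes of members of `F`. -/
def sprefF {n : ℕ} (F : Finset (List (Fin n))) : Finset (List (Fin n)) :=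
  F.biUnion (fun w => w.dropLast.inits.toFinset)

lemma strict_prefix_iff_dropLast {α : Type*} {x w : List α} (hw : w ≠ []) :
    (x <+: w ∧ x ≠ w) ↔ x <+: w.dropLast := by
  constructor
  · rintro ⟨hpre, hne⟩
    refine List.prefix_of_prefix_length_le hpre (List.dropLast_prefix w) ?_
    have hlt : x.length < w.length := by
      rcases lt_or_eq_of_le hpre.length_le with h | h
      · exact h
      · exact absurd (List.IsPrefix.eq_of_length hpre h) hne
    rw [List.length_dropLast]; omega
  · intro h
    have hpre : x <+: w := h.trans (List.dropLast_prefix w)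
    refine ⟨hpre, ?_⟩
    have := h.length_le
    rw [List.length_dropLast] at this
    intro he
    have h0 : 0 < w.length := List.length_pos_of_ne_nil hw
    rw [he] at this
    omega

lemma mem_sprefF {n : ℕ} {F : Finset (List (Fin n))} {x : List (Fin n)} :
    x ∈ sprefF F ↔ ∃ w ∈ F, x <+: w.dropLast := by
  simp [sprefF, List.mem_inits]

lemma card_filter_lt {n m : ℕ} (hmn : m ≤ n) :
    (Finset.univ.filter (fun a : Fin n => (a : ℕ) < m)).card = m := by
  have : Finset.univ.filter (fun a : Fin n => (a : ℕ) < m)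
      = Finset.univ.image (Fin.castLE hmn) := by
    ext a
    simp only [Finset.mem_filter, Finset.mem_univ, true_and, Finset.mem_image]
    constructor
    · intro ha; exact ⟨⟨(a : ℕ), ha⟩, rfl⟩
    · rintro ⟨b, rfl⟩; exact b.isLt
  rw [this, Finset.card_image_of_injective _ (Fin.castLE_injective hmn)]
  simp

lemma card_filter_ge {n m : ℕ} (hmn : m ≤ n) :
    (Finset.univ.filter (fun a : Fin n => m ≤ (a : ℕ))).card = n - m := by
  have h : Finset.univ.filter (fun a : Fin n => m ≤ (a : ℕ))
      = Finset.univ.image (fun t : Fin (n - m) =>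
          (⟨m + (t : ℕ), by have := t.isLt; omega⟩ : Fin n)) := by
    ext a
    simp only [Finset.mem_filter, Finset.mem_univ, true_and, Finset.mem_image]
    constructor
    · intro ha
      refine ⟨⟨(a : ℕ) - m, by have := a.isLt; omega⟩, ?_⟩
      apply Fin.ext; simp; omega
    · rintro ⟨t, rfl⟩; simp
  rw [h, Finset.card_image_of_injective]
  · simp
  · intro t t' htt
    have h2 := congrArg Fin.val htt
    simp only at h2
    have h3 : (t : ℕ) = (t' : ℕ) := by omega
    exact Fin.ext h3

lemma tree_count {n m : ℕ} (hm : 2 ≤ m) (hmn : m ≤ n) (F : Finset (List (Fin n)))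
    (hne : F.Nonempty)
    (hhead : ∀ w ∈ F, ∃ t, w = (⟨m - 1, by omega⟩ : Fin n) :: t)
    (hlet : ∀ w ∈ F, ∀ a ∈ w, (a : ℕ) < m)
    (hpf : ∀ w ∈ F, ∀ w' ∈ F, w <+: w' → w = w') :
    F.card ≤ (m - 1) * (sprefF F).card := by
  classical
  have hwne : ∀ w ∈ F, w ≠ [] := by
    rintro w hw; obtain ⟨t, rfl⟩ := hhead w hw; simp
  have hdisj : Disjoint F (sprefF F) := by
    rw [Finset.disjoint_left]
    intro w hw hw'
    obtain ⟨w', hw'F, hpre⟩ := mem_sprefF.mp hw'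
    obtain ⟨h1, h2⟩ := (strict_prefix_iff_dropLast (hwne w' hw'F)).mpr hpre
    exact h2 (hpf w hw w' hw'F h1)
  have hroot : ([] : List (Fin n)) ∈ sprefF F := by
    obtain ⟨w, hw⟩ := hne
    exact mem_sprefF.mpr ⟨w, hw, List.nil_prefix⟩
  set Nodes : Finset (List (Fin n)) := F ∪ sprefF F with hN
  have hNcard : Nodes.card = F.card + (sprefF F).card :=
    Finset.card_union_of_disjoint hdisj
  have hnode : ∀ y ∈ Nodes, ∃ w ∈ F, y <+: w := by
    intro y hy
    rcases Finset.mem_union.mp hy with h | h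
    · exact ⟨y, h, List.prefix_refl y⟩
    · obtain ⟨w, hwF, hpre⟩ := mem_sprefF.mp h
      exact ⟨w, hwF, hpre.trans (List.dropLast_prefix w)⟩
  have hmaps : ∀ y ∈ Nodes.erase [], y.dropLast ∈ sprefF F := by
    intro y hy
    obtain ⟨hyne, hyN⟩ := Finset.mem_erase.mp hy
    obtain ⟨w, hwF, hpre⟩ := hnode y hyN
    refine mem_sprefF.mpr ⟨w, hwF, ?_⟩
    refine (strict_prefix_iff_dropLast (hwne w hwF)).mp ⟨(List.dropLast_prefix y).trans hpre, ?_⟩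
    intro he
    have h1 : y.length ≤ w.length := hpre.length_le
    have h2 : w.length = y.length - 1 := by rw [← he, List.length_dropLast]
    have : 0 < y.length := List.length_pos_of_ne_nil hyne
    omega
  have hcard1 : (Nodes.erase []).card = F.card + (sprefF F).card - 1 := by
    rw [Finset.card_erase_of_mem (Finset.mem_union_right _ hroot), hNcard]
  have hfw : (Nodes.erase []).card
      = ∑ x ∈ sprefF F, ((Nodes.erase []).filter (fun y => y.dropLast = x)).card :=
    Finset.card_eq_sum_card_fiberwise hmaps
  have hfiber : ∀ x ∈ sprefF F,
      ((Nodes.erase []).filter (fun y => y.dropLast = x)).card ≤ m := by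
    intro x hx
    have hsub : (Nodes.erase []).filter (fun y => y.dropLast = x) ⊆
        (Finset.univ.filter (fun a : Fin n => (a : ℕ) < m)).image (fun a => x ++ [a]) := by
      intro y hy
      obtain ⟨hy1, hy2⟩ := Finset.mem_filter.mp hy
      obtain ⟨hyne, hyN⟩ := Finset.mem_erase.mp hy1
      obtain ⟨w, hwF, hpre⟩ := hnode y hyN
      have hsplit : y = x ++ [y.getLast hyne] := by
        rw [← hy2]; exact (List.dropLast_append_getLast hyne).symm
      refine Finset.mem_image.mpr ⟨y.getLast hyne, ?_, hsplit.symm⟩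
      refine Finset.mem_filter.mpr ⟨Finset.mem_univ _, ?_⟩
      exact hlet w hwF _ (hpre.subset (List.getLast_mem hyne))
    calc ((Nodes.erase []).filter (fun y => y.dropLast = x)).card
        ≤ _ := Finset.card_le_card hsub
      _ ≤ (Finset.univ.filter (fun a : Fin n => (a : ℕ) < m)).card := Finset.card_image_le
      _ = m := card_filter_lt hmn
  have hfiber0 :
      ((Nodes.erase []).filter (fun y => y.dropLast = ([] : List (Fin n)))).card ≤ 1 := by
    refine Finset.card_le_one.mpr ?_
    intro y hy z hz
    obtain ⟨hy1, hy2⟩ := Finset.mem_filter.mp hy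
    obtain ⟨hyne, hyN⟩ := Finset.mem_erase.mp hy1
    obtain ⟨hz1, hz2⟩ := Finset.mem_filter.mp hz
    obtain ⟨hzne, hzN⟩ := Finset.mem_erase.mp hz1
    have hy' : y = [y.getLast hyne] := by
      conv_lhs => rw [← List.dropLast_append_getLast hyne]
      rw [hy2]; simp
    have hz' : z = [z.getLast hzne] := by
      conv_lhs => rw [← List.dropLast_append_getLast hzne]
      rw [hz2]; simp
    obtain ⟨w, hwF, hpre⟩ := hnode y hyN
    obtain ⟨w', hw'F, hpre'⟩ := hnode z hzN
    obtain ⟨t, rfl⟩ := hhead w hwF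
    obtain ⟨t', rfl⟩ := hhead w' hw'F
    rw [hy'] at hpre ⊢
    rw [hz'] at hpre' ⊢
    rw [List.cons_prefix_cons] at hpre hpre'
    rw [hpre.1, hpre'.1]
  have hsum : (Nodes.erase []).card ≤ 1 + ((sprefF F).card - 1) * m := by
    rw [hfw, ← Finset.sum_erase_add _ _ hroot]
    have h1 : ∑ x ∈ (sprefF F).erase [],
        ((Nodes.erase []).filter (fun y => y.dropLast = x)).card
        ≤ ((sprefF F).erase []).card * m := by
      refine Finset.sum_le_card_nsmul _ _ m ?_
      intro x hx
      exact hfiber x (Finset.mem_of_mem_erase hx)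
    have h2 := hfiber0
    have h3 : ((sprefF F).erase []).card = (sprefF F).card - 1 :=
      Finset.card_erase_of_mem hroot
    rw [h3] at h1
    omega
  have hI : 1 ≤ (sprefF F).card := Finset.card_pos.mpr ⟨[], hroot⟩
  obtain ⟨J, hJ⟩ : ∃ J, (sprefF F).card = J + 1 := ⟨(sprefF F).card - 1, by omega⟩
  obtain ⟨M, rfl⟩ : ∃ M, m = M + 2 := ⟨m - 2, by omega⟩
  rw [hcard1, hJ] at hsum
  simp only [Nat.add_sub_cancel] at hsum
  have hF1 : 1 ≤ F.card := Finset.card_pos.mpr hne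
  have hs2 : F.card + J ≤ 1 + J * (M + 2) := by omega
  rw [hJ]
  show F.card ≤ (M + 1) * (J + 1)
  nlinarith [hs2]

/-! ### The pool of candidates beats `p s` -/

lemma pool_gt {n m l : ℕ} (p : Fin l → List (Fin n))
    (hppf : ∀ u v : Fin l, p u <+: p v → u = v)
    (hplet : ∀ u : Fin l, ∀ a ∈ p u, (a : ℕ) < m)
    (hrev : ∀ s t : Fin l, s < t → DictLt (p t) (p s))
    (s u : Fin l) (hu : u ≤ s)
    (x : List (Fin n)) (hx : x <+: p u) (hxne : x ≠ p u)
    (j : Fin n) (hj : m ≤ (j : ℕ)) :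
    DictLt (p s) (x ++ [j]) := by
  by_cases hxs : x <+: p s
  · -- x is a (strict) prefix of p s
    have hxnes : x ≠ p s := by
      rintro rfl
      exact hxne (congrArg p (hppf s u hx) ▸ rfl)
    obtain ⟨w, hw⟩ := hxs
    cases w with
    | nil => exact absurd (by simpa using hw) hxnes
    | cons d r =>
      have hd : (d : ℕ) < m := hplet s d (by rw [← hw]; simp)
      have hdj : d < j := Fin.lt_def.mpr (by omega)
      refine ⟨Or.inr ⟨x, r, [], d, j, hdj, hw.symm, rfl⟩, ?_⟩
      intro he
      have : x ++ d :: r = x ++ [j] := by rw [hw, ← he]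
      have := List.append_cancel_left this
      rw [List.cons.injEq] at this
      have : (d : ℕ) = (j : ℕ) := congrArg Fin.val this.1
      omega
  · -- x is not a prefix of p s, so u < s and x goes through the splitting point
    have hus : u < s := by
      rcases lt_or_eq_of_le hu with h | h
      · exact h
      · exact absurd (h ▸ hx) hxs
    obtain ⟨hle, hne⟩ := hrev u s hus
    rcases hle with hpre | ⟨y, ss, tt, α, β, hab, hps, hpu⟩
    · exact absurd (congrArg p (hppf s u hpre)) (fun h => hne (h ▸ rfl))
    · -- p s = y ++ α :: ss, p u = y ++ β :: tt, α < β
      have hy_u : y <+: p u := ⟨β :: tt, hpu.symm⟩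
      have hy_s : y <+: p s := ⟨α :: ss, hps.symm⟩
      have hylt : y.length < x.length := by
        by_contra hc
        push_neg at hc
        exact hxs ((List.prefix_of_prefix_length_le hx hy_u hc).trans hy_s)
      have hyx : y ++ [β] <+: x := by
        refine List.prefix_of_prefix_length_le ?_ hx ?_
        · rw [hpu]; exact ⟨tt, by simp⟩
        · simp; omega
      obtain ⟨z, hz⟩ := hyx
      refine ⟨Or.inr ⟨y, ss, z ++ [j], α, β, hab, hps, ?_⟩, ?_⟩
      · rw [← hz]; simp
      · intro he
        have : y ++ α :: ss = y ++ β :: (z ++ [j]) := by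
          rw [← hps, he, ← hz]; simp
        have := List.append_cancel_left this
        rw [List.cons.injEq] at this
        exact absurd this.1 (ne_of_lt hab)

/-! ### Choice of least element -/

open Classical in
noncomputable def leastW {n : ℕ} (S : Set (List (Fin n))) : List (Fin n) :=
  if h : ∃ w, w ∈ S ∧ ∀ v ∈ S, DictLe w v then h.choose else []

lemma leastW_spec {n : ℕ} {S : Set (List (Fin n))}
    (h : ∃ w, w ∈ S ∧ ∀ v ∈ S, DictLe w v) :
    leastW S ∈ S ∧ ∀ v ∈ S, DictLe (leastW S) v := by
  classical
  rw [leastW, dif_pos h]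
  exact h.choose_spec

lemma exists_least_of_finite {n : ℕ} {S : Set (List (Fin n))}
    (hfin : S.Finite) (hne : S.Nonempty) :
    ∃ w, w ∈ S ∧ ∀ v ∈ S, DictLe w v := by
  obtain ⟨w, hw, hmin⟩ := Finset.exists_min_image hfin.toFinset id
    (by simpa [Set.Finite.toFinset_nonempty] using hne)
  refine ⟨w, hfin.mem_toFinset.mp hw, fun v hv => ?_⟩
  exact dictLe_iff_le.mpr (hmin v (hfin.mem_toFinset.mpr hv))

/-! ### The recursion -/

noncomputable def nxt (n m k l : ℕ) (p : Fin l → List (Fin n)) (hl : 0 < l)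
    (h : List (List (Fin n))) : List (Fin n) :=
  leastW (Cand m p ⟨h.length / k % l, Nat.mod_lt _ hl⟩ {w | w ∈ h})

noncomputable def hist (n m k l : ℕ) (p : Fin l → List (Fin n)) (hl : 0 < l) :
    ℕ → List (List (Fin n))
  | 0 => []
  | e + 1 => hist n m k l p hl e ++ [nxt n m k l p hl (hist n m k l p hl e)]

noncomputable def G (n m k l : ℕ) (p : Fin l → List (Fin n)) (hl : 0 < l) (e : ℕ) :
    List (Fin n) :=
  nxt n m k l p hl (hist n m k l p hl e)

lemma hist_len (n m k l : ℕ) (p : Fin l → List (Fin n)) (hl : 0 < l) (e : ℕ) :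
    (hist n m k l p hl e).length = e := by
  induction e with
  | zero => rfl
  | succ e ih => simp [hist, ih]

lemma mem_hist (n m k l : ℕ) (p : Fin l → List (Fin n)) (hl : 0 < l) (e : ℕ)
    (w : List (Fin n)) :
    w ∈ hist n m k l p hl e ↔ ∃ e' < e, w = G n m k l p hl e' := by
  induction e with
  | zero => simp [hist]
  | succ e ih =>
    simp only [hist, List.mem_append, List.mem_singleton, ih]
    constructor
    · rintro (⟨e', he', rfl⟩ | rfl)
      · exact ⟨e', by omega, rfl⟩
      · exact ⟨e, by omega, rfl⟩
    · rintro ⟨e', he', rfl⟩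
      rcases Nat.lt_succ_iff_lt_or_eq.mp he' with h | rfl
      · exact Or.inl ⟨e', h, rfl⟩
      · exact Or.inr rfl

lemma G_def (n m k l : ℕ) (p : Fin l → List (Fin n)) (hl : 0 < l) (e : ℕ) :
    G n m k l p hl e = leastW (Cand m p ⟨e / k % l, Nat.mod_lt _ hl⟩
      {w | ∃ e' < e, w = G n m k l p hl e'}) := by
  rw [G, nxt]
  have h1 : (⟨(hist n m k l p hl e).length / k % l, Nat.mod_lt _ hl⟩ : Fin l)
      = ⟨e / k % l, Nat.mod_lt _ hl⟩ := by
    apply Fin.ext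
    simp [hist_len]
  have h2 : {w | w ∈ hist n m k l p hl e} = {w | ∃ e' < e, w = G n m k l p hl e'} :=
    Set.ext fun w => mem_hist n m k l p hl e w
  rw [h1, h2]

/-- Arithmetic helper: lexicographic order versus the linear stage index. -/
lemma lexlt_iff {k a b c d : ℕ} (hb : b < k) (hd : d < k) :
    (a < c ∨ (a = c ∧ b < d)) ↔ a * k + b < c * k + d := by
  constructor
  · rintro (h | ⟨rfl, h⟩)
    · have h1 : (a + 1) * k ≤ c * k := Nat.mul_le_mul_right k h
      rw [Nat.succ_mul] at h1
      omega
    · omega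
  · intro h
    rcases lt_trichotomy a c with h' | h' | h'
    · exact Or.inl h'
    · subst h'; exact Or.inr ⟨rfl, by omega⟩
    · exfalso
      have h1 : (c + 1) * k ≤ a * k := Nat.mul_le_mul_right k h'
      rw [Nat.succ_mul] at h1
      omega

/-- In the successor construction (for a complete prefix code
`P₀` over `A_m` with `P = a_{m-1}‖P₀` listed in reverse dictionary order as
`p_1 >_dict ⋯ >_dict p_l`, and `n - m = k(m-1)`, `k ≥ 1`), at every stage the
defining minimum exists, so there is a unique successor assignment
`(s, i) ↦ (p_s)'_i`; moreover, the successors are pairwise distinct. -/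
theorem stmt12 (m n k l : ℕ) (hm : 2 ≤ m) (hmn : m ≤ n) (hk : 1 ≤ k)
    (hnm : n - m = k * (m - 1)) (hl : 1 ≤ l)
    (q : Fin l → List (Fin n))
    (hqA : ∀ s : Fin l, ∀ a ∈ q s, (a : ℕ) < m)
    (hqcpc : ∀ ζ : ℕ → Fin n, (∀ i, (ζ i : ℕ) < m) →
      ∃! s : Fin l, IsPref (q s) ζ)
    (p : Fin l → List (Fin n))
    (hp : ∀ s : Fin l, p s = (⟨m - 1, by omega⟩ : Fin n) :: q s)
    (hrev : ∀ s t : Fin l, s < t → DictLt (p t) (p s)) :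
    (∃! f : Fin l → Fin k → List (Fin n), IsSuccAssign m p f) ∧
    ∀ f : Fin l → Fin k → List (Fin n), IsSuccAssign m p f →
      Function.Injective (fun si : Fin l × Fin k => f si.1 si.2) := by
  classical
  have hl0 : 0 < l := hl
  have hk0 : 0 < k := hk
  -- prefix-freeness of q
  have hqpf : ∀ s t : Fin l, q s <+: q t → s = t := by
    intro s t hpre
    by_contra hne
    set ζ : ℕ → Fin n := fun i =>
      if h : i < (q t).length then (q t)[i] else ⟨0, by omega⟩ with hζ
    have hζm : ∀ i, (ζ i : ℕ) < m := by
      intro i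
      simp only [hζ]
      split
      · exact hqA t _ (List.getElem_mem _)
      · simpa using by omega
    have hts : IsPref (q t) ζ := by
      intro i h
      simp [hζ, h]
    have hss : IsPref (q s) ζ := by
      intro i h
      have hlti : i < (q t).length := lt_of_lt_of_le h hpre.length_le
      have hg := hpre.getElem h
      simp [hζ, hlti, ← hg]
    obtain ⟨u, _, huniq⟩ := hqcpc ζ hζm
    exact hne ((huniq s hss).trans (huniq t hts).symm)
  have hppf : ∀ u v : Fin l, p u <+: p v → u = v := by
    intro u v h
    rw [hp u, hp v, List.cons_prefix_cons] at h
    exact hqpf u v h.2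
  have hplet : ∀ u : Fin l, ∀ a ∈ p u, (a : ℕ) < m := by
    intro u a ha
    rw [hp u] at ha
    rcases List.mem_cons.mp ha with rfl | h
    · simp; omega
    · exact hqA u a h
  have hpne : ∀ u : Fin l, p u ≠ [] := by
    intro u; rw [hp u]; simp
  -- notation
  set G0 : ℕ → List (Fin n) := G n m k l p hl0 with hG0
  -- the stage lemma
  have stage : ∀ e, e < l * k →
      G0 e ∈ Cand m p ⟨e / k % l, Nat.mod_lt _ hl0⟩ {w | ∃ e' < e, w = G0 e'} ∧
      ∀ w ∈ Cand m p ⟨e / k % l, Nat.mod_lt _ hl0⟩ {w | ∃ e' < e, w = G0 e'},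
        DictLe (G0 e) w := by
    intro e he
    set s : Fin l := ⟨e / k % l, Nat.mod_lt _ hl0⟩ with hs
    set PS : Set (List (Fin n)) := {w | ∃ e' < e, w = G0 e'} with hPS
    have hsdiv : (s : ℕ) = e / k := by
      have : e / k < l := Nat.div_lt_of_lt_mul (Nat.mul_comm l k ▸ he)
      simp [hs, Nat.mod_eq_of_lt this]
    -- the finsets
    set Fs : Finset (List (Fin n)) :=
      (Finset.univ.filter (fun u : Fin l => u ≤ s)).image p with hFs
    set hiF : Finset (Fin n) :=
      Finset.univ.filter (fun j : Fin n => m ≤ (j : ℕ)) with hhiF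
    set PoolF : Finset (List (Fin n)) :=
      ((sprefF Fs) ×ˢ hiF).image (fun xj => xj.1 ++ [xj.2]) with hPoolF
    have hpinjOn : Set.InjOn p ↑(Finset.univ.filter (fun u : Fin l => u ≤ s)) := by
      intro u _ v _ huv
      by_contra hne
      rcases lt_or_gt_of_ne hne with h | h
      · exact (hrev u v h).2 huv.symm
      · exact (hrev v u h).2 huv
    have hfiltcard : (Finset.univ.filter (fun u : Fin l => u ≤ s)).card = (s : ℕ) + 1 := by
      have hsl : (s : ℕ) + 1 ≤ l := s.isLt
      have : Finset.univ.filter (fun u : Fin l => u ≤ s)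
          = Finset.univ.image (Fin.castLE hsl) := by
        ext u
        simp only [Finset.mem_filter, Finset.mem_univ, true_and, Finset.mem_image]
        constructor
        · intro hu
          have hu' : (u : ℕ) ≤ (s : ℕ) := hu
          exact ⟨⟨(u : ℕ), Nat.lt_succ_of_le hu'⟩, by apply Fin.ext; simp⟩
        · rintro ⟨b, rfl⟩
          have := b.isLt
          show ((Fin.castLE hsl b : Fin l) : ℕ) ≤ (s : ℕ)
          simp; omega
      rw [this, Finset.card_image_of_injective _ (Fin.castLE_injective hsl)]
      simp
    have hFscard : Fs.card = (s : ℕ) + 1 := by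
      rw [hFs, Finset.card_image_of_injOn hpinjOn, hfiltcard]
    -- tree bound
    have htree : Fs.card ≤ (m - 1) * (sprefF Fs).card := by
      refine tree_count hm hmn Fs ⟨p s, ?_⟩ ?_ ?_ ?_
      · exact Finset.mem_image.mpr ⟨s, by simp, rfl⟩
      · rintro w hw
        obtain ⟨u, _, rfl⟩ := Finset.mem_image.mp hw
        exact ⟨q u, hp u⟩
      · rintro w hw a ha
        obtain ⟨u, _, rfl⟩ := Finset.mem_image.mp hw
        exact hplet u a ha
      · rintro w hw w' hw' hpre
        obtain ⟨u, _, rfl⟩ := Finset.mem_image.mp hw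
        obtain ⟨v, _, rfl⟩ := Finset.mem_image.mp hw'
        rw [hppf u v hpre]
    have hhiFcard : hiF.card = n - m := card_filter_ge hmn
    have hPoolcard : PoolF.card = (sprefF Fs).card * (n - m) := by
      rw [hPoolF, Finset.card_image_of_injOn, Finset.card_product, hhiFcard]
      rintro ⟨x, j⟩ _ ⟨x', j'⟩ _ heq
      simp only at heq
      have hlen : x.length = x'.length := by
        have := congrArg List.length heq
        simp at this
        omega
      obtain ⟨h1, h2⟩ := List.append_inj heq hlen
      simp only [List.cons.injEq] at h2
      exact Prod.ext h1 h2.1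
    -- cardinality chain
    have hcard_chain : e + 1 ≤ PoolF.card := by
      have h1 : e < (e / k + 1) * k := by
        have := Nat.div_add_mod e k
        have := Nat.mod_lt e hk0
        rw [Nat.succ_mul, Nat.mul_comm (e / k) k]
        omega
      have h2 : ((s : ℕ) + 1) * k ≤ ((m - 1) * (sprefF Fs).card) * k := by
        apply Nat.mul_le_mul_right
        rw [← hFscard]; exact htree
      have h3 : ((m - 1) * (sprefF Fs).card) * k = (sprefF Fs).card * (n - m) := by
        rw [hnm]; ring
      rw [hPoolcard, ← h3]
      calc e + 1 ≤ (e / k + 1) * k := h1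
        _ = ((s : ℕ) + 1) * k := by rw [hsdiv]
        _ ≤ _ := h2
    -- find a fresh pool element
    set PrevF : Finset (List (Fin n)) := (Finset.range e).image G0 with hPrevF
    have hPrevcard : PrevF.card ≤ e := by
      calc PrevF.card ≤ (Finset.range e).card := Finset.card_image_le
        _ = e := Finset.card_range e
    obtain ⟨w₀, hw₀P, hw₀p⟩ : ∃ w₀ ∈ PoolF, w₀ ∉ PrevF := by
      by_contra hc
      push_neg at hc
      have : PoolF ⊆ PrevF := hc
      have := Finset.card_le_card this
      omega
    -- w₀ is a candidate
    have hw₀cand : w₀ ∈ Cand m p s PS := by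
      obtain ⟨⟨x, j⟩, hxj, rfl⟩ := Finset.mem_image.mp hw₀P
      obtain ⟨hx, hj⟩ := Finset.mem_product.mp hxj
      obtain ⟨w', hw'F, hxpre⟩ := mem_sprefF.mp hx
      obtain ⟨u, huf, rfl⟩ := Finset.mem_image.mp hw'F
      have hu : u ≤ s := (Finset.mem_filter.mp huf).2
      obtain ⟨hxp, hxnep⟩ := (strict_prefix_iff_dropLast (hpne u)).mpr hxpre
      have hjm : m ≤ (j : ℕ) := (Finset.mem_filter.mp hj).2
      refine ⟨⟨x, ⟨u, hxp, hxnep⟩, j, hjm, rfl⟩, ?_, ?_⟩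
      · exact pool_gt p hppf hplet hrev s u hu x hxp hxnep j hjm
      · rintro ⟨e', he', heq⟩
        refine hw₀p ?_
        rw [heq]
        exact Finset.mem_image.mpr ⟨e', Finset.mem_range.mpr he', rfl⟩
    -- Cand is finite
    have hfin : (Cand m p s PS).Finite := by
      set FsAll : Finset (List (Fin n)) := Finset.univ.image p with hFsAll
      set PoolAll : Finset (List (Fin n)) :=
        ((sprefF FsAll) ×ˢ hiF).image (fun xj => xj.1 ++ [xj.2]) with hPoolAll
      refine Set.Finite.subset PoolAll.finite_toSet ?_
      rintro w ⟨⟨x, ⟨u, hxu, hxneu⟩, j, hjm, rfl⟩, _, _⟩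
      refine Finset.mem_coe.mpr (Finset.mem_image.mpr ⟨(x, j), ?_, rfl⟩)
      refine Finset.mem_product.mpr ⟨?_, ?_⟩
      · exact mem_sprefF.mpr ⟨p u, Finset.mem_image.mpr ⟨u, Finset.mem_univ u, rfl⟩,
          (strict_prefix_iff_dropLast (hpne u)).mp ⟨hxu, hxneu⟩⟩
      · simp only [hhiF, Finset.mem_filter, Finset.mem_univ, true_and]
        exact hjm
    have hleast := exists_least_of_finite hfin ⟨w₀, hw₀cand⟩
    have := leastW_spec hleast
    rw [show leastW (Cand m p s PS) = G0 e from (G_def n m k l p hl0 e).symm] at this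
    exact this
  -- the successor assignment
  set f₀ : Fin l → Fin k → List (Fin n) := fun s i => G0 ((s : ℕ) * k + (i : ℕ)) with hf₀
  have harith : ∀ (s : Fin l) (i : Fin k), (s : ℕ) * k + (i : ℕ) < l * k := by
    intro s i
    have h1 : (s : ℕ) + 1 ≤ l := s.isLt
    have h2 : ((s : ℕ) + 1) * k ≤ l * k := Nat.mul_le_mul_right k h1
    rw [Nat.succ_mul] at h2
    have := i.isLt
    omega
  have hdm : ∀ sv iv : ℕ, iv < k → (sv * k + iv) / k = sv ∧ (sv * k + iv) % k = iv := by
    intro sv iv hiv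
    constructor
    · rw [Nat.mul_comm, Nat.mul_add_div hk0, Nat.div_eq_of_lt hiv, Nat.add_zero]
    · rw [Nat.mul_comm, Nat.mul_add_mod]
      exact Nat.mod_eq_of_lt hiv
  -- Prev of f₀ is the set of earlier G0-values
  have hPrev₀ : ∀ (s : Fin l) (i : Fin k),
      Prev f₀ s i = {w | ∃ e' < (s : ℕ) * k + (i : ℕ), w = G0 e'} := by
    intro s i
    ext w
    simp only [Prev, Set.mem_setOf_eq]
    constructor
    · rintro ⟨s', i', hlt, rfl⟩
      refine ⟨(s' : ℕ) * k + (i' : ℕ), ?_, rfl⟩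
      refine (lexlt_iff i'.isLt i.isLt).mp ?_
      rcases hlt with h | ⟨h, h2⟩
      · exact Or.inl (Fin.lt_def.mp h)
      · exact Or.inr ⟨congrArg Fin.val h, Fin.lt_def.mp h2⟩
    · rintro ⟨e', he', rfl⟩
      have he'lk : e' < l * k := lt_of_lt_of_le he' (le_of_lt (harith s i))
      refine ⟨⟨e' / k, Nat.div_lt_of_lt_mul (Nat.mul_comm l k ▸ he'lk)⟩,
        ⟨e' % k, Nat.mod_lt _ hk0⟩, ?_, ?_⟩
      · have hdec : (e' / k) * k + e' % k = e' := by
          have := Nat.div_add_mod e' k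
          rw [Nat.mul_comm] at this
          omega
        have hlt' : (e' / k) * k + e' % k < (s : ℕ) * k + (i : ℕ) := by
          rw [hdec]; exact he'
        rcases (lexlt_iff (Nat.mod_lt _ hk0) i.isLt).mpr hlt' with h | ⟨h, h2⟩
        · exact Or.inl (Fin.lt_def.mpr h)
        · exact Or.inr ⟨Fin.ext h, Fin.lt_def.mpr h2⟩
      · show G0 e' = G0 ((e' / k) * k + e' % k)
        congr 1
        have := Nat.div_add_mod e' k
        rw [Nat.mul_comm] at this
        omega
  -- f₀ is a successor assignment
  have hsucc : IsSuccAssign m p f₀ := by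
    intro s i
    have he := harith s i
    have hst := stage ((s : ℕ) * k + (i : ℕ)) he
    have hsE : (⟨((s : ℕ) * k + (i : ℕ)) / k % l, Nat.mod_lt _ hl0⟩ : Fin l) = s := by
      apply Fin.ext
      show ((s : ℕ) * k + (i : ℕ)) / k % l = (s : ℕ)
      rw [(hdm (s : ℕ) (i : ℕ) i.isLt).1, Nat.mod_eq_of_lt s.isLt]
    rw [hsE] at hst
    rw [show (Prev f₀ s i) = {w | ∃ e' < (s : ℕ) * k + (i : ℕ), w = G0 e'} from hPrev₀ s i]
    exact hst
  -- uniqueness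
  have huniq : ∀ f g : Fin l → Fin k → List (Fin n),
      IsSuccAssign m p f → IsSuccAssign m p g → f = g := by
    intro f g hf hg
    have key : ∀ e : ℕ, ∀ (s : Fin l) (i : Fin k), (s : ℕ) * k + (i : ℕ) = e →
        f s i = g s i := by
      intro e
      induction e using Nat.strong_induction_on with
      | _ e ih =>
        intro s i he
        have hprev : Prev f s i = Prev g s i := by
          ext w
          have hstep : ∀ (s' : Fin l) (i' : Fin k),
              (s' < s ∨ (s' = s ∧ i' < i)) → f s' i' = g s' i' := by
            intro s' i' hlt
            refine ih ((s' : ℕ) * k + (i' : ℕ)) ?_ s' i' rfl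
            rw [← he]
            refine (lexlt_iff i'.isLt i.isLt).mp ?_
            rcases hlt with h | ⟨h, h2⟩
            · exact Or.inl (Fin.lt_def.mp h)
            · exact Or.inr ⟨congrArg Fin.val h, Fin.lt_def.mp h2⟩
          constructor
          · rintro ⟨s', i', hlt, rfl⟩
            exact ⟨s', i', hlt, hstep s' i' hlt⟩
          · rintro ⟨s', i', hlt, rfl⟩
            exact ⟨s', i', hlt, (hstep s' i' hlt).symm⟩
        obtain ⟨hf1, hf2⟩ := hf s i
        obtain ⟨hg1, hg2⟩ := hg s i
        rw [hprev] at hf1 hf2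
        exact le_antisymm (dictLe_iff_le.mp (hf2 _ hg1)) (dictLe_iff_le.mp (hg2 _ hf1))
    funext s i
    exact key _ s i rfl
  refine ⟨⟨f₀, hsucc, fun g hg => huniq g f₀ hg hsucc⟩, ?_⟩
  -- injectivity
  intro f hf
  rintro ⟨s, i⟩ ⟨s', i'⟩ heq
  simp only at heq
  rcases lt_trichotomy ((s : ℕ) * k + (i : ℕ)) ((s' : ℕ) * k + (i' : ℕ)) with h | h | h
  · exfalso
    have hmem : f s i ∈ Prev f s' i' := by
      refine ⟨s, i, ?_, rfl⟩
      rcases (lexlt_iff i.isLt i'.isLt).mpr h with h' | ⟨h', h2⟩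
      · exact Or.inl (Fin.lt_def.mpr h')
      · exact Or.inr ⟨Fin.ext h', Fin.lt_def.mpr h2⟩
    rw [heq] at hmem
    exact (hf s' i').1.2.2 hmem
  · have hs : (s : ℕ) = (s' : ℕ) := by
      rcases lt_trichotomy (s : ℕ) (s' : ℕ) with h' | h' | h'
      · exact absurd ((lexlt_iff i.isLt i'.isLt).mp (Or.inl h')) (by omega)
      · exact h'
      · exact absurd ((lexlt_iff i'.isLt i.isLt).mp (Or.inl h')) (by omega)
    have hsk : (s : ℕ) * k = (s' : ℕ) * k := by rw [hs]
    have hi : (i : ℕ) = (i' : ℕ) := by omega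
    have : s = s' := Fin.ext hs
    subst this
    have : i = i' := Fin.ext hi
    subst this
    rfl
  · exfalso
    have hmem : f s' i' ∈ Prev f s i := by
      refine ⟨s', i', ?_, rfl⟩
      rcases (lexlt_iff i'.isLt i.isLt).mpr h with h' | ⟨h', h2⟩
      · exact Or.inl (Fin.lt_def.mpr h')
      · exact Or.inr ⟨Fin.ext h', Fin.lt_def.mpr h2⟩
    rw [← heq] at hmem
    exact (hf s i).1.2.2 hmem

end Paper
end

section
/- Let n ≥ 2, let H ≤ Sym(n), and let u and v be homeomorphisms of C_n induced by the tables (P; σ_1,…,σ_k; S; τ_1,…,τ_k) and (S; σ'_1,…,σ'_k; Q'; τ'_1,…,τ'_k) over H respectively, where both tables use the same complete prefix code S = {s_1,…,s_k} with matching indexing. Then the composite v ∘ u is induced by the table (P; σ_1τ_1^{−1},…,σ_kτ_k^{−1}; Q'; τ'_1(σ'_1)^{−1},…,τ'_k(σ'_k)^{−1}). -/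
namespace Paper

/-!
The suffix `w` in a table row is arbitrary, so substituting `πᵢ(w)` for it lets us multiply both
permutations of row `i` on the right by any `πᵢ`. Normalising the table of `u` so that its range
permutations become trivial, and that of `v` so that its domain permutations do, the two tables
meet along `S` with identity permutations and compose row by row.
-/

namespace TableFun

variable {n : ℕ} {ι : Type} {P Q S : ι → List (Fin n)} {σ τ : ι → Equiv.Perm (Fin n)}
  {f g : (ℕ → Fin n) → (ℕ → Fin n)}

theorem mul_right (h : TableFun P Q σ τ f) (π : ι → Equiv.Perm (Fin n)) :
    TableFun P Q (σ * π) (τ * π) f :=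
  fun i u => h i fun j => π i (u j)

theorem mul_inv_right (h : TableFun P Q σ τ f) : TableFun P Q (σ * τ⁻¹) 1 f := by
  simpa only [mul_inv_cancel] using h.mul_right τ⁻¹

theorem mul_inv_left (h : TableFun P Q σ τ f) : TableFun P Q 1 (τ * σ⁻¹) f := by
  simpa only [mul_inv_cancel] using h.mul_right σ⁻¹

theorem comp (hf : TableFun P S σ 1 f) (hg : TableFun S Q 1 τ g) :
    TableFun P Q σ τ (g ∘ f) := fun i u => by
  rw [Function.comp_apply, hf i u, hg i u]

end TableFun

theorem stmt17_general (n : ℕ) (k : ℕ)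
    (P S Q' : Fin k → List (Fin n))
    (σ τ σ' τ' : Fin k → Equiv.Perm (Fin n))
    (u v : (ℕ → Fin n) ≃ₜ (ℕ → Fin n))
    (hu : TableFun P S σ τ ⇑u) (hv : TableFun S Q' σ' τ' ⇑v) :
    TableFun P Q' (fun i => σ i * (τ i)⁻¹) (fun i => τ' i * (σ' i)⁻¹)
      (⇑v ∘ ⇑u) :=
  hu.mul_inv_right.comp hv.mul_inv_left

/-- If `u` is induced by the table `(P; σ; S; τ)` and `v` by the
table `(S; σ'; Q'; τ')` over `H`, with the same middle complete prefix code `S` and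
matching indexing, then `v ∘ u` is induced by the table
`(P; σᵢτᵢ⁻¹; Q'; τ'ᵢ(σ'ᵢ)⁻¹)`. -/
theorem stmt17 (n : ℕ) (hn : 2 ≤ n) (H : Subgroup (Equiv.Perm (Fin n))) (k : ℕ)
    (P S Q' : Fin k → List (Fin n)) (hP : IsCPC P) (hS : IsCPC S) (hQ' : IsCPC Q')
    (σ τ σ' τ' : Fin k → Equiv.Perm (Fin n))
    (hσ : ∀ i, σ i ∈ H) (hτ : ∀ i, τ i ∈ H)
    (hσ' : ∀ i, σ' i ∈ H) (hτ' : ∀ i, τ' i ∈ H)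
    (u v : (ℕ → Fin n) ≃ₜ (ℕ → Fin n))
    (hu : TableFun P S σ τ ⇑u) (hv : TableFun S Q' σ' τ' ⇑v) :
    TableFun P Q' (fun i => σ i * (τ i)⁻¹) (fun i => τ' i * (σ' i)⁻¹)
      (⇑v ∘ ⇑u) :=
  stmt17_general n k P S Q' σ τ σ' τ' u v hu hv

end Paper
end
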